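/- arXiv:1406.3900 — 4 statements merged into one kernel-verified Lean document; each statement's English description precedes it below -/
import Mathlib

section
/- For all real t and all x in (0, π], the function f(x,t) = 2e^t·arctan(e^{-t}·sin(x/2)) satisfies Lf(x,t) ≥ 0, where Lf = ((f')² − 1)/f'' − f − ∂f/∂t and f' , f'' denote first and second derivatives of f with respect to x. -/
/-!
Write `a = e⁻ᵗ`, `s = sin (x/2)`, `c = cos (x/2)` and `u = a s`. The derivatives `f'`, `f''` and
`∂f/∂t = f - 2s/(1 + u²)` are rational in `a, s, c`, and `f = (2s/u) arctan u` enters `Lf` with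
coefficient `-2`. Bounding `arctan u` above by its Padé approximant `u (u² + 3)/(2u² + 3)` for
`u ≥ 0` therefore reduces `Lf ≥ 0` to a polynomial inequality in `a²s²` and `s²` with
nonnegative coefficients.
-/

open Real

/-- The comparison function `f(x,t) = 2 eᵗ arctan(e⁻ᵗ sin(x/2))`. -/
noncomputable def compFun (x t : ℝ) : ℝ :=
  2 * Real.exp t * Real.arctan (Real.exp (-t) * Real.sin (x / 2))

theorem Real.arctan_le_pade_of_nonneg {v : ℝ} (hv : 0 ≤ v) :
    arctan v ≤ v * (v ^ 2 + 3) / (2 * v ^ 2 + 3) := by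
  set g : ℝ → ℝ := fun v => v * (v ^ 2 + 3) / (2 * v ^ 2 + 3) - arctan v
  have hg : ∀ z, HasDerivAt g (z ^ 4 * (2 * z ^ 2 + 1) / ((2 * z ^ 2 + 3) ^ 2 * (1 + z ^ 2))) z := by
    intro z
    have hden : (2 * z ^ 2 + 3 : ℝ) ≠ 0 := by positivity
    refine ((((hasDerivAt_id' z).fun_mul ((hasDerivAt_pow 2 z).add_const 3)).div
      (((hasDerivAt_pow 2 z).const_mul 2).add_const 3) hden).fun_sub
        (hasDerivAt_arctan z)).congr_deriv ?_
    field_simp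
    ring
  have hmono : Monotone g :=
    monotone_of_deriv_nonneg (fun z => (hg z).differentiableAt)
      (fun z => (hg z).deriv ▸ by positivity)
  simpa [g] using hmono hv

theorem hasDerivAt_compFun_left (t y : ℝ) :
    HasDerivAt (fun y => compFun y t) (cos (y / 2) / (1 + (exp (-t) * sin (y / 2)) ^ 2)) y := by
  refine (((((hasDerivAt_id' y).div_const 2).sin.const_mul (exp (-t))).arctan).const_mul
    (2 * exp t)).congr_deriv ?_
  rw [exp_neg]
  field_simp

theorem hasDerivAt_deriv_compFun_left (t x : ℝ) :
    HasDerivAt (deriv fun y => compFun y t)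
      (-(sin (x / 2) * (1 + (exp (-t) * sin (x / 2)) ^ 2 + 2 * exp (-t) ^ 2 * cos (x / 2) ^ 2)) /
        (2 * (1 + (exp (-t) * sin (x / 2)) ^ 2) ^ 2)) x := by
  rw [funext fun y => (hasDerivAt_compFun_left t y).deriv]
  have hden : (1 + (exp (-t) * sin (x / 2)) ^ 2) ≠ 0 := by positivity
  refine (((hasDerivAt_id' x).div_const 2).cos.div
    ((((hasDerivAt_id' x).div_const 2).sin.const_mul (exp (-t))).fun_pow 2 |>.const_add 1)
      hden).congr_deriv ?_
  field_simp
  ring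

theorem hasDerivAt_compFun_right (x t : ℝ) :
    HasDerivAt (fun s => compFun x s)
      (compFun x t - 2 * sin (x / 2) / (1 + (exp (-t) * sin (x / 2)) ^ 2)) t := by
  refine (((hasDerivAt_exp t).const_mul 2).mul
    (((hasDerivAt_neg' t).exp.mul_const (sin (x / 2))).arctan)).congr_deriv ?_
  unfold compFun
  rw [exp_neg]
  field_simp
  ring

theorem compFun_le_pade (x t : ℝ) (hs : 0 ≤ sin (x / 2)) :
    compFun x t ≤ 2 * sin (x / 2) * ((exp (-t) * sin (x / 2)) ^ 2 + 3) /
      (2 * (exp (-t) * sin (x / 2)) ^ 2 + 3) := by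
  have h := arctan_le_pade_of_nonneg (mul_nonneg (exp_pos (-t)).le hs)
  calc compFun x t
      ≤ 2 * exp t * (exp (-t) * sin (x / 2) * ((exp (-t) * sin (x / 2)) ^ 2 + 3) /
          (2 * (exp (-t) * sin (x / 2)) ^ 2 + 3)) := by unfold compFun; gcongr
    _ = _ := by rw [exp_neg]; field_simp

/- With `w = a²s²` and `c² = 1 - s²`, cross-multiplying leaves
`w² + 2ws² + 6w²s² + 5w³ + 2w³s² + 2w⁴ ≥ 0`. -/
theorem operator_nonneg_of_le_pade {a s c f : ℝ} (hs : 0 < s) (hsc : s ^ 2 + c ^ 2 = 1)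
    (hf : f ≤ 2 * s * ((a * s) ^ 2 + 3) / (2 * (a * s) ^ 2 + 3)) :
    ((c / (1 + (a * s) ^ 2)) ^ 2 - 1) /
        (-(s * (1 + (a * s) ^ 2 + 2 * a ^ 2 * c ^ 2)) / (2 * (1 + (a * s) ^ 2) ^ 2))
      - f - (f - 2 * s / (1 + (a * s) ^ 2)) ≥ 0 := by
  have hpade : 2 * s * ((a * s) ^ 2 + 3) / (2 * (a * s) ^ 2 + 3) ≤
      ((1 + (a * s) ^ 2) ^ 2 - c ^ 2) / (s * (1 + (a * s) ^ 2 + 2 * a ^ 2 * c ^ 2)) +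
        s / (1 + (a * s) ^ 2) := by
    rw [div_add_div _ _ (by positivity) (by positivity),
      div_le_div_iff₀ (by positivity) (by positivity), show c ^ 2 = 1 - s ^ 2 by linarith]
    linarith [show 0 ≤ (a ^ 2 * s ^ 2) ^ 2 + 2 * (a ^ 2 * s ^ 2) * s ^ 2
      + 6 * (a ^ 2 * s ^ 2) ^ 2 * s ^ 2 + 5 * (a ^ 2 * s ^ 2) ^ 3
      + 2 * (a ^ 2 * s ^ 2) ^ 3 * s ^ 2 + 2 * (a ^ 2 * s ^ 2) ^ 4 by positivity]
  have hquot : ((c / (1 + (a * s) ^ 2)) ^ 2 - 1) /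
        (-(s * (1 + (a * s) ^ 2 + 2 * a ^ 2 * c ^ 2)) / (2 * (1 + (a * s) ^ 2) ^ 2)) =
      2 * (((1 + (a * s) ^ 2) ^ 2 - c ^ 2) / (s * (1 + (a * s) ^ 2 + 2 * a ^ 2 * c ^ 2))) := by
    field_simp
    ring
  rw [hquot, mul_div_assoc]
  linarith

/-- `Lf = ((f')² − 1)/f'' − f − ∂f/∂t ≥ 0` on `(0, π]` for all `t`. -/
theorem stmt_0 (t x : ℝ) (hx : x ∈ Set.Ioc 0 Real.pi) :
    ((deriv (fun y => compFun y t) x) ^ 2 - 1) /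
        (deriv (deriv (fun y => compFun y t)) x)
      - compFun x t - deriv (fun s => compFun x s) t ≥ 0 := by
  obtain ⟨hx0, hxpi⟩ := hx
  have hs : 0 < sin (x / 2) := sin_pos_of_pos_of_lt_pi (by linarith) (by linarith [pi_pos])
  rw [(hasDerivAt_compFun_left t x).deriv, (hasDerivAt_deriv_compFun_left t x).deriv,
    (hasDerivAt_compFun_right x t).deriv]
  exact operator_nonneg_of_le_pade hs (sin_sq_add_cos_sq _) (compFun_le_pade x t hs.le)
end

section
/- Let φ : [0, T) → ℝ be locally Lipschitz with φ(0) ≥ 0 and suppose there exists c₀ > 0 such that for almost every t where φ(t) > 0 one has φ'(t) ≤ −c₀·φ(t)³. Then φ(t) ≤ (2c₀t)^{-1/2} for all t ∈ (0, T). -/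
/-!
Where `φ > 0`, the function `ψ = φ⁻²` satisfies `ψ' = -2φ'/φ³ ≥ 2c₀` almost everywhere. On an
interval `[s, t]` on which `φ` is positive it is bounded below, so `ψ` is Lipschitz there, hence
absolutely continuous, and the fundamental theorem of calculus gives `ψ t - ψ s ≥ 2c₀(t - s)`.
In particular `φ s ≥ φ t` on such intervals, so if `φ t > 0` then `φ` cannot vanish on `[0, t]`
(approaching its last zero from the right it would stay `≥ φ t`). Taking `s = 0` gives
`(φ t)⁻² ≥ 2c₀t`.
-/

open MeasureTheory Set ENNReal

theorem AbsolutelyContinuousOnInterval.mul_sub_le_image_sub_of_le_deriv_ae {f : ℝ → ℝ}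
    {a b m : ℝ} (hf : AbsolutelyContinuousOnInterval f a b) (hab : a ≤ b)
    (hm : ∀ᵐ x ∂(volume.restrict (Ioo a b)), m ≤ deriv f x) :
    m * (b - a) ≤ f b - f a := by
  rw [← hf.integral_deriv_eq_sub]
  calc m * (b - a) = ∫ _ in a..b, m := by simp [mul_comm]
    _ ≤ ∫ x in a..b, deriv f x :=
      intervalIntegral.integral_mono_ae_restrict hab intervalIntegrable_const
        hf.intervalIntegrable_deriv (by rwa [← restrict_Ioo_eq_restrict_Icc])

theorem lipschitzOnWith_inv_sq_Ici {δ : ℝ} (hδ : 0 < δ) :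
    LipschitzOnWith (2 / δ ^ 3).toNNReal (fun x : ℝ ↦ (x ^ 2)⁻¹) (Ici δ) := by
  refine (convex_Ici δ).lipschitzOnWith_of_nnnorm_hasDerivWithin_le (fun x hx ↦
    ((hasDerivAt_pow 2 x).inv (pow_ne_zero 2 (hδ.trans_le hx).ne')).hasDerivWithinAt)
    fun x (hx : δ ≤ x) ↦ ?_
  have hx0 : 0 < x := hδ.trans_le hx
  rw [← NNReal.coe_le_coe, coe_nnnorm, Real.coe_toNNReal _ (by positivity), Real.norm_eq_abs]
  calc |-((2 : ℕ) * x ^ (2 - 1)) / (x ^ 2) ^ 2| = 2 / x ^ 3 := by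
        rw [abs_div, abs_neg, abs_of_pos (by positivity), abs_of_pos (by positivity)]
        field_simp
        ring
    _ ≤ 2 / δ ^ 3 := by gcongr

theorem two_mul_le_deriv_inv_sq {φ : ℝ → ℝ} {c x : ℝ} (hd : DifferentiableAt ℝ φ x)
    (hx : 0 < φ x) (h : deriv φ x ≤ -c * φ x ^ 3) :
    2 * c ≤ deriv (fun y ↦ (φ y ^ 2)⁻¹) x := by
  rw [((hd.hasDerivAt.fun_pow 2).fun_inv (by positivity)).deriv, le_div_iff₀ (by positivity)]
  simp only [Nat.cast_ofNat, Nat.add_one_sub_one, pow_one]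
  nlinarith [mul_le_mul_of_nonneg_left h (by positivity : (0 : ℝ) ≤ 2 * φ x)]

theorem two_mul_sub_le_inv_sq_sub_inv_sq {φ : ℝ → ℝ} {K : NNReal} {c s t : ℝ} (hst : s ≤ t)
    (hφ : LipschitzOnWith K φ (Icc s t)) (hpos : ∀ u ∈ Icc s t, 0 < φ u)
    (hode : ∀ᵐ x ∂(volume.restrict (Ioo s t)),
      DifferentiableAt ℝ φ x ∧ (0 < φ x → deriv φ x ≤ -c * φ x ^ 3)) :
    2 * c * (t - s) ≤ (φ t ^ 2)⁻¹ - (φ s ^ 2)⁻¹ := by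
  obtain ⟨u₀, hu₀, hmin⟩ := isCompact_Icc.exists_isMinOn (nonempty_Icc.2 hst) hφ.continuousOn
  have hψ : LipschitzOnWith ((2 / φ u₀ ^ 3).toNNReal * K) (fun x ↦ (φ x ^ 2)⁻¹) (uIcc s t) := by
    rw [uIcc_of_le hst]
    exact (lipschitzOnWith_inv_sq_Ici (hpos u₀ hu₀)).comp hφ fun u hu ↦ hmin hu
  refine hψ.absolutelyContinuousOnInterval.mul_sub_le_image_sub_of_le_deriv_ae hst ?_
  filter_upwards [hode, ae_restrict_mem measurableSet_Ioo] with x ⟨hd, hx⟩ hxI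
  have hφx := hpos x (Ioo_subset_Icc_self hxI)
  exact two_mul_le_deriv_inv_sq hd hφx (hx hφx)

theorem ContinuousOn.forall_pos_Icc_of_le_of_pos_tail {φ : ℝ → ℝ} {a b : ℝ}
    (hφ : ContinuousOn φ (Icc a b)) (hb : 0 < φ b)
    (htail : ∀ s ∈ Icc a b, (∀ u ∈ Icc s b, 0 < φ u) → φ b ≤ φ s) :
    ∀ u ∈ Icc a b, 0 < φ u := by
  by_contra! ⟨u, hu, hu0⟩
  set S := Icc a b ∩ φ ⁻¹' Iic 0
  have hS : IsCompact S := isCompact_Icc.of_isClosed_subset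
    (hφ.preimage_isClosed_of_isClosed isClosed_Icc isClosed_Iic) inter_subset_left
  obtain ⟨⟨hac, hcb⟩, hc0 : φ (sSup S) ≤ 0⟩ : sSup S ∈ S := hS.sSup_mem ⟨u, hu, hu0⟩
  set c := sSup S
  have hpos : ∀ v ∈ Ioc c b, 0 < φ v := fun v hv ↦ by
    by_contra! h
    exact hv.1.not_ge (le_csSup hS.bddAbove ⟨⟨hac.trans hv.1.le, hv.2⟩, h⟩)
  have hcb : c < b := hcb.lt_of_ne fun h ↦ (h ▸ hc0).not_gt hb
  have hclosed : IsClosed (Icc c b ∩ φ ⁻¹' Ici (φ b)) :=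
    (hφ.mono (Icc_subset_Icc_left hac)).preimage_isClosed_of_isClosed isClosed_Icc isClosed_Ici
  have hsub : Ioc c b ⊆ Icc c b ∩ φ ⁻¹' Ici (φ b) := fun v hv ↦
    ⟨Ioc_subset_Icc_self hv, htail v ⟨hac.trans hv.1.le, hv.2⟩
      fun w hw ↦ hpos w ⟨hv.1.trans_le hw.1, hw.2⟩⟩
  have hcmem : c ∈ closure (Ioc c b) := by
    rw [closure_Ioc hcb.ne]; exact left_mem_Icc.2 hcb.le
  have : φ b ≤ φ c := (hclosed.closure_subset_iff.2 hsub hcmem).2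
  linarith

theorem le_rpow_neg_one_half_of_le_inv_sq {x A : ℝ} (hA : 0 < A) (h : A ≤ (x ^ 2)⁻¹) :
    x ≤ A ^ (-(1 / 2) : ℝ) := by
  have hx2 : x ^ 2 ≤ A⁻¹ := (le_inv_comm₀ hA (inv_pos.1 (hA.trans_le h))).1 h
  calc x ≤ |x| := le_abs_self x
    _ ≤ √A⁻¹ := Real.abs_le_sqrt hx2
    _ = A ^ (-(1 / 2) : ℝ) := by
      rw [Real.sqrt_eq_rpow, Real.inv_rpow hA.le, Real.rpow_neg hA.le]

theorem stmt_8_general (T : ℝ≥0∞) (φ : ℝ → ℝ) (c₀ : ℝ) (hc₀ : 0 < c₀)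
    (hlip : ∀ K : Set ℝ, IsCompact K → K ⊆ {t : ℝ | 0 ≤ t ∧ ENNReal.ofReal t < T} →
      ∃ C : NNReal, LipschitzOnWith C φ K)
    (hode : ∀ᵐ t ∂(volume.restrict {t : ℝ | 0 ≤ t ∧ ENNReal.ofReal t < T}),
      DifferentiableAt ℝ φ t ∧ (0 < φ t → deriv φ t ≤ -c₀ * φ t ^ 3)) :
    ∀ t : ℝ, 0 < t → ENNReal.ofReal t < T →
      φ t ≤ (2 * c₀ * t) ^ (-(1 / 2) : ℝ) := by
  intro t ht htT
  rcases le_or_gt (φ t) 0 with hφt | hφt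
  · exact hφt.trans (Real.rpow_nonneg (by positivity) _)
  have hsub : Icc 0 t ⊆ {x : ℝ | 0 ≤ x ∧ ENNReal.ofReal x < T} :=
    fun x hx ↦ ⟨hx.1, (ENNReal.ofReal_le_ofReal hx.2).trans_lt htT⟩
  obtain ⟨K, hK⟩ := hlip _ isCompact_Icc hsub
  have hgrowth : ∀ s ∈ Icc 0 t, (∀ u ∈ Icc s t, 0 < φ u) →
      2 * c₀ * (t - s) ≤ (φ t ^ 2)⁻¹ - (φ s ^ 2)⁻¹ := fun s hs hpos ↦
    have hst : Icc s t ⊆ Icc 0 t := Icc_subset_Icc_left hs.1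
    two_mul_sub_le_inv_sq_sub_inv_sq hs.2 (hK.mono hst) hpos
      (ae_restrict_of_ae_restrict_of_subset (Ioo_subset_Icc_self.trans (hst.trans hsub)) hode)
  have hpos : ∀ u ∈ Icc 0 t, 0 < φ u := hK.continuousOn.forall_pos_Icc_of_le_of_pos_tail hφt
    fun s hs hpos ↦ by
      have hφs := hpos s (left_mem_Icc.2 hs.2)
      have : (φ s ^ 2)⁻¹ ≤ (φ t ^ 2)⁻¹ := by nlinarith [hgrowth s hs hpos, hs.2]
      exact (pow_le_pow_iff_left₀ hφt.le hφs.le two_ne_zero).1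
        ((inv_le_inv₀ (by positivity) (by positivity)).1 this)
  refine le_rpow_neg_one_half_of_le_inv_sq (by positivity) ?_
  linarith [hgrowth 0 (left_mem_Icc.2 ht.le) hpos, inv_nonneg.2 (sq_nonneg (φ 0))]

/-- ODE comparison: if `φ' ≤ −c₀ φ³` (a.e.) wherever `φ > 0`, with `φ(0) ≥ 0`,
then `φ(t) ≤ (2 c₀ t)^{-1/2}`.  Here `T ∈ (0,∞]` and the domain is `[0,T)`. -/
theorem stmt_8 (T : ℝ≥0∞) (hT : 0 < T) (φ : ℝ → ℝ) (c₀ : ℝ) (hc₀ : 0 < c₀)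
    (hlip : ∀ K : Set ℝ, IsCompact K → K ⊆ {t : ℝ | 0 ≤ t ∧ ENNReal.ofReal t < T} →
      ∃ C : NNReal, LipschitzOnWith C φ K)
    (h0 : 0 ≤ φ 0)
    (hode : ∀ᵐ t ∂(volume.restrict {t : ℝ | 0 ≤ t ∧ ENNReal.ofReal t < T}),
      DifferentiableAt ℝ φ t ∧ (0 < φ t → deriv φ t ≤ -c₀ * φ t ^ 3)) :
    ∀ t : ℝ, 0 < t → ENNReal.ofReal t < T →
      φ t ≤ (2 * c₀ * t) ^ (-(1 / 2) : ℝ) :=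
  stmt_8_general T φ c₀ hc₀ hlip hode
end

section
/- Let φ : [0, T) → ℝ be locally Lipschitz and nonnegative, and let c₁, c₂ > 0. Suppose for almost every t ∈ [0, T): if φ(t) ≥ c₁·min{1, 1/t} then φ'(t) ≤ −c₂·φ(t)². Then there is a constant c (depending on c₁, c₂, φ(0)) such that φ(t) ≤ c·min{1, 1/t} for all t ∈ (0, T). -/
/-!
The function `ψ t = c / max t 1` equals `c · min{1, 1/t}` for `t > 0`, and for
`c ≥ max {c₁, 1/c₂, φ 0}` it is a barrier: wherever `φ > ψ`, the hypothesis applies and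
`φ' ≤ -c₂ φ² ≤ -c₂ ψ² ≤ ψ'` (for `t > 1` because `c₂ c² / t² ≥ c / t²`, for `t < 1` because
`ψ` is constant there). So `φ - ψ` is a Lipschitz function that starts `≤ 0` and a.e. cannot
increase while positive; by the fundamental theorem of calculus for absolutely continuous
functions it stays `≤ 0`.
-/

open MeasureTheory Set ENNReal Filter Topology

theorem AbsolutelyContinuousOnInterval.le_of_ae_deriv_nonpos {f : ℝ → ℝ} {a b : ℝ}
    (hf : AbsolutelyContinuousOnInterval f a b) (hab : a ≤ b)
    (hderiv : ∀ᵐ t ∂volume.restrict (Ioo a b), deriv f t ≤ 0) : f b ≤ f a := by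
  have hint : 0 ≤ ∫ t in a..b, -deriv f t := by
    refine intervalIntegral.integral_nonneg_of_ae_restrict hab ?_
    rw [← Measure.restrict_congr_set Ioo_ae_eq_Icc]
    filter_upwards [hderiv] with t ht
    simpa using ht
  rw [intervalIntegral.integral_neg, hf.integral_deriv_eq_sub] at hint
  linarith

/-- The positive part `max g 0` is absolutely continuous with a.e. nonpositive derivative: where
`g ≤ 0` it has a local minimum, and where `g > 0` it agrees with `g` nearby. -/
theorem LipschitzOnWith.nonpos_of_ae_deriv_nonpos_of_pos {g : ℝ → ℝ} {K : NNReal} {a b : ℝ}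
    (hg : LipschitzOnWith K g (Icc a b)) (hab : a ≤ b) (ha : g a ≤ 0)
    (hderiv : ∀ᵐ t ∂volume.restrict (Ioo a b), 0 < g t → deriv g t ≤ 0) : g b ≤ 0 := by
  set gpos : ℝ → ℝ := fun t => max (g t) 0
  have hac : AbsolutelyContinuousOnInterval gpos a b := by
    refine LipschitzOnWith.absolutelyContinuousOnInterval (K := 1 * K) ?_
    rw [uIcc_of_le hab]
    exact (LipschitzWith.id.max_const 0).comp_lipschitzOnWith hg
  have hmono : gpos b ≤ gpos a := by
    refine hac.le_of_ae_deriv_nonpos hab ?_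
    filter_upwards [hderiv, ae_restrict_mem measurableSet_Ioo] with t hgt ht
    rcases le_or_gt (g t) 0 with hle | hlt
    · have hmin : IsLocalMin gpos t :=
        Eventually.of_forall fun s => by simp only [gpos, max_eq_right hle]; exact le_max_right _ _
      exact hmin.deriv_eq_zero.le
    · have hcont : ContinuousAt g t := hg.continuousOn.continuousAt (Icc_mem_nhds ht.1 ht.2)
      have heq : gpos =ᶠ[𝓝 t] g :=
        (hcont.eventually (lt_mem_nhds hlt)).mono fun s hs => max_eq_left hs.le
      rw [heq.deriv_eq]
      exact hgt hlt
  calc g b ≤ gpos b := le_max_left _ _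
    _ ≤ gpos a := hmono
    _ = 0 := max_eq_right ha

section Barrier

variable (c : ℝ)

theorem div_max_one_eq_mul_min {t : ℝ} (ht : 0 < t) : c / max t 1 = c * min 1 (1 / t) := by
  rcases le_total t 1 with h | h
  · rw [max_eq_right h, min_eq_left (one_le_one_div ht h), div_one, mul_one]
  · rw [max_eq_left h, min_eq_right (div_le_one_of_le₀ h ht.le), mul_one_div]

theorem lipschitzWith_div_max_one (hc : 0 ≤ c) :
    LipschitzWith c.toNNReal fun t : ℝ => c / max t 1 := by
  refine LipschitzWith.of_dist_le_mul fun s t => ?_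
  have hs : 1 ≤ max s 1 := le_max_right _ _
  have ht : 1 ≤ max t 1 := le_max_right _ _
  rw [Real.dist_eq, Real.dist_eq, Real.coe_toNNReal _ hc]
  have hst : 0 < max s 1 * max t 1 := by positivity
  calc |c / max s 1 - c / max t 1| = c * |max t 1 - max s 1| / (max s 1 * max t 1) := by
        rw [div_sub_div _ _ (by positivity) (by positivity), abs_div, abs_of_pos hst,
          mul_comm (max s 1) c, ← mul_sub, abs_mul, abs_of_nonneg hc]
    _ ≤ c * |max t 1 - max s 1| :=
        div_le_self (by positivity) (one_le_mul_of_one_le_of_one_le hs ht)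
    _ ≤ c * |s - t| := by
        rw [abs_sub_comm s t]; exact mul_le_mul_of_nonneg_left (abs_max_sub_max_le_abs _ _ _) hc

theorem hasDerivAt_div_max_one_of_lt {t : ℝ} (ht : t < 1) :
    HasDerivAt (fun s : ℝ => c / max s 1) 0 t := by
  refine (hasDerivAt_const t c).congr_of_eventuallyEq ?_
  filter_upwards [Iio_mem_nhds ht] with s hs
  rw [max_eq_right (le_of_lt hs), div_one]

theorem hasDerivAt_div_max_one_of_gt {t : ℝ} (ht : 1 < t) :
    HasDerivAt (fun s : ℝ => c / max s 1) (-c / t ^ 2) t := by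
  have h := (hasDerivAt_inv (zero_lt_one.trans ht).ne').const_mul c
  rw [mul_neg, ← div_eq_mul_inv, ← neg_div] at h
  refine h.congr_of_eventuallyEq ?_
  filter_upwards [Ioi_mem_nhds ht] with s hs
  rw [max_eq_left (le_of_lt hs), div_eq_mul_inv]

theorem deriv_sub_div_max_one_nonpos {φ : ℝ → ℝ} {c₂ t : ℝ} (hc : 0 ≤ c) (hc₂ : 1 ≤ c₂ * c)
    (ht : t ≠ 1) (hφ : DifferentiableAt ℝ φ t) (habove : c / max t 1 < φ t)
    (hdecay : deriv φ t ≤ -c₂ * φ t ^ 2) :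
    deriv (fun s => φ s - c / max s 1) t ≤ 0 := by
  have hc₂0 : 0 ≤ c₂ := by nlinarith
  rcases ht.lt_or_gt with ht | ht
  · rw [(hφ.hasDerivAt.fun_sub (hasDerivAt_div_max_one_of_lt c ht)).deriv]
    nlinarith [sq_nonneg (φ t)]
  · rw [(hφ.hasDerivAt.fun_sub (hasDerivAt_div_max_one_of_gt c ht)).deriv]
    rw [max_eq_left ht.le] at habove
    have ht0 : 0 < t := zero_lt_one.trans ht
    have hsq : (c / t) ^ 2 ≤ φ t ^ 2 := pow_le_pow_left₀ (by positivity) habove.le 2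
    have hbarrier : c / t ^ 2 ≤ c₂ * (c / t) ^ 2 := by
      rw [div_pow, ← mul_div_assoc]
      gcongr
      nlinarith
    nlinarith [mul_le_mul_of_nonneg_left hsq hc₂0, neg_div (t ^ 2) c]

end Barrier

theorem stmt_9_general (T : ℝ≥0∞) (φ : ℝ → ℝ) (c₁ c₂ : ℝ)
    (hc₁ : 0 < c₁) (hc₂ : 0 < c₂)
    (hlip : ∀ K : Set ℝ, IsCompact K → K ⊆ {t : ℝ | 0 ≤ t ∧ ENNReal.ofReal t < T} →
      ∃ C : NNReal, LipschitzOnWith C φ K)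
    (hode : ∀ᵐ t ∂(volume.restrict {t : ℝ | 0 ≤ t ∧ ENNReal.ofReal t < T}),
      DifferentiableAt ℝ φ t ∧
        (c₁ * min 1 (1 / t) ≤ φ t → deriv φ t ≤ -c₂ * φ t ^ 2)) :
    ∃ c : ℝ, 0 < c ∧ ∀ t : ℝ, 0 < t → ENNReal.ofReal t < T →
      φ t ≤ c * min 1 (1 / t) := by
  obtain ⟨c, hc₁c, hc₂c, hφc⟩ : ∃ c, c₁ ≤ c ∧ 1 ≤ c₂ * c ∧ φ 0 ≤ c :=
    ⟨max (max c₁ c₂⁻¹) (φ 0), le_max_of_le_left (le_max_left _ _),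
      (mul_inv_cancel₀ hc₂.ne').ge.trans
        (mul_le_mul_of_nonneg_left (le_max_of_le_left (le_max_right _ _)) hc₂.le),
      le_max_right _ _⟩
  have hc : 0 < c := hc₁.trans_le hc₁c
  refine ⟨c, hc, fun b hb hbT => ?_⟩
  have hsub : Icc 0 b ⊆ {t : ℝ | 0 ≤ t ∧ ENNReal.ofReal t < T} := fun t ht =>
    ⟨ht.1, (ENNReal.ofReal_le_ofReal ht.2).trans_lt hbT⟩
  obtain ⟨K, hK⟩ := hlip _ isCompact_Icc hsub
  have hode' : ∀ᵐ t ∂volume.restrict (Ioo 0 b), DifferentiableAt ℝ φ t ∧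
      (c₁ * min 1 (1 / t) ≤ φ t → deriv φ t ≤ -c₂ * φ t ^ 2) :=
    ae_restrict_of_ae_restrict_of_subset (Ioo_subset_Icc_self.trans hsub) hode
  have hbelow : φ b - c / max b 1 ≤ 0 := by
    have hlip_sub := hK.sub (lipschitzWith_div_max_one c hc.le).lipschitzOnWith
    refine hlip_sub.nonpos_of_ae_deriv_nonpos_of_pos hb.le (by simpa using hφc) ?_
    filter_upwards [hode', ae_restrict_mem measurableSet_Ioo, ae_restrict_of_ae (volume.ae_ne 1)]
      with t ⟨hdiff, hdecay⟩ ht ht1 habove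
    rw [sub_pos] at habove
    refine deriv_sub_div_max_one_nonpos c hc.le hc₂c ht1 hdiff habove (hdecay ?_)
    calc c₁ * min 1 (1 / t) ≤ c * min 1 (1 / t) := by
          gcongr; exact le_min zero_le_one (one_div_pos.2 ht.1).le
      _ = c / max t 1 := (div_max_one_eq_mul_min c ht.1).symm
      _ ≤ φ t := habove.le
  rw [← div_max_one_eq_mul_min c hb]
  linarith

/-- If nonnegative locally Lipschitz `φ` satisfies `φ' ≤ −c₂ φ²` (a.e.) whenever
`φ(t) ≥ c₁ min{1, 1/t}`, then `φ(t) ≤ c · min{1, 1/t}` on `(0,T)`, `T ∈ (0,∞]`. -/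
theorem stmt_9 (T : ℝ≥0∞) (hT : 0 < T) (φ : ℝ → ℝ) (c₁ c₂ : ℝ)
    (hc₁ : 0 < c₁) (hc₂ : 0 < c₂)
    (hlip : ∀ K : Set ℝ, IsCompact K → K ⊆ {t : ℝ | 0 ≤ t ∧ ENNReal.ofReal t < T} →
      ∃ C : NNReal, LipschitzOnWith C φ K)
    (hpos : ∀ t : ℝ, 0 ≤ t → ENNReal.ofReal t < T → 0 ≤ φ t)
    (hode : ∀ᵐ t ∂(volume.restrict {t : ℝ | 0 ≤ t ∧ ENNReal.ofReal t < T}),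
      DifferentiableAt ℝ φ t ∧
        (c₁ * min 1 (1 / t) ≤ φ t → deriv φ t ≤ -c₂ * φ t ^ 2)) :
    ∃ c : ℝ, 0 < c ∧ ∀ t : ℝ, 0 < t → ENNReal.ofReal t < T →
      φ t ≤ c * min 1 (1 / t) :=
  stmt_9_general T φ c₁ c₂ hc₁ hc₂ hlip hode
end

section
/- Gagliardo–Nirenberg interpolation on the circle: for integers 0 ≤ i < m there is a constant c(m,i) such that for every smooth function u on S¹ (circle of length 2π) with mean zero, ‖Dⁱu‖_∞ ≤ c(m,i)·‖Dᵐu‖_∞^{(2i+1)/(2m+1)}·‖u‖_{L²}^{2(m−i)/(2m+1)}. -/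
open Real MeasureTheory Set
open scoped ContDiff

/-- root extraction: from `x^n ≤ K y^n` conclude `x ≤ K^{1/n} y`. -/
lemma GN.root_extract' {n : ℕ} (hn : 1 ≤ n) {K x y : ℝ} (hK : 0 ≤ K) (hy : 0 ≤ y)
    (h : x ^ n ≤ K * y ^ n) : x ≤ K ^ ((1 : ℝ)/n) * y := by
  have hKn : (K ^ ((1:ℝ)/n)) ^ n = K := by
    rw [← Real.rpow_natCast (K ^ ((1:ℝ)/n)) n, ← Real.rpow_mul hK]
    rw [one_div, inv_mul_cancel₀ (by exact_mod_cast Nat.one_le_iff_ne_zero.mp hn), Real.rpow_one]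
  have h2 : x ^ n ≤ (K ^ ((1:ℝ)/n) * y) ^ n := by
    rw [mul_pow, hKn]; exact h
  exact le_of_pow_le_pow_left₀ (by omega) (by positivity) h2

section Chain


variable {n : ℕ} {a : ℕ → ℝ}

lemma GN.chainU (ha : ∀ j, 0 ≤ a j)
    (hL : ∀ j, 1 ≤ j → j + 1 ≤ n → a j ^ 2 ≤ 4 * (a (j - 1) * a (j + 1))) :
    ∀ j, 1 ≤ j → j + 1 ≤ n → a 1 * a j ≤ 4 ^ j * (a 0 * a (j + 1)) := by
  intro j
  induction j with
  | zero => omega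
  | succ k ih =>
    intro _ hkn
    rcases Nat.eq_zero_or_pos k with rfl | hk
    · have := hL 1 le_rfl hkn
      simpa [pow_two] using this.trans (le_of_eq (by ring))
    · -- k ≥ 1
      have hih := ih hk (by omega)
      have hLk : a (k+1) ^ 2 ≤ 4 * (a k * a (k+2)) := by
        have := hL (k+1) (by omega) (by omega)
        simpa using this
      have hP : (a 1 * a (k+1)) ^ 2 ≤ 4 ^ (k+1) * (a 0 * a (k+2)) * (a 1 * a (k+1)) := by
        calc (a 1 * a (k+1)) ^ 2 = a 1 ^ 2 * a (k+1) ^ 2 := by ring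
          _ ≤ a 1 ^ 2 * (4 * (a k * a (k+2))) := by
              apply mul_le_mul_of_nonneg_left hLk (by positivity)
          _ = 4 * a (k+2) * a 1 * (a 1 * a k) := by ring
          _ ≤ 4 * a (k+2) * a 1 * (4 ^ k * (a 0 * a (k+1))) := by
              apply mul_le_mul_of_nonneg_left hih
              have := ha (k+2); have := ha 1; positivity
          _ = 4 ^ (k+1) * (a 0 * a (k+2)) * (a 1 * a (k+1)) := by ring
      rcases eq_or_lt_of_le (mul_nonneg (ha 1) (ha (k+1))) with hz | hpos
      · rw [← hz]
        have := ha 0; have := ha (k+2); positivity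
      · have := (mul_le_mul_iff_of_pos_right hpos).mp (by calc (a 1 * a (k+1)) * (a 1 * a (k+1)) = (a 1 * a (k+1))^2 := by ring
                                                  _ ≤ 4 ^ (k+1) * (a 0 * a (k+2)) * (a 1 * a (k+1)) := hP)
        exact this

lemma GN.chainT (ha : ∀ j, 0 ≤ a j)
    (hL : ∀ j, 1 ≤ j → j + 1 ≤ n → a j ^ 2 ≤ 4 * (a (j - 1) * a (j + 1))) :
    ∀ j, 1 ≤ j → j ≤ n → a 1 ^ j ≤ 4 ^ (j * j) * (a 0 ^ (j - 1) * a j) := by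
  intro j
  induction j with
  | zero => omega
  | succ k ih =>
    intro _ hkn
    rcases Nat.eq_zero_or_pos k with rfl | hk
    · have := ha 1
      calc a 1 ^ 1 = a 1 := pow_one _
        _ ≤ 4 ^ (1*1) * (a 0 ^ 0 * a 1) := by norm_num; linarith
    · have hih := ih hk (by omega)
      have hU := GN.chainU ha hL k hk (by omega)
      calc a 1 ^ (k+1) = a 1 ^ k * a 1 := by ring
        _ ≤ (4 ^ (k*k) * (a 0 ^ (k-1) * a k)) * a 1 := by
            apply mul_le_mul_of_nonneg_right hih (ha 1)
        _ = 4 ^ (k*k) * a 0 ^ (k-1) * (a 1 * a k) := by ring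
        _ ≤ 4 ^ (k*k) * a 0 ^ (k-1) * (4 ^ k * (a 0 * a (k+1))) := by
            apply mul_le_mul_of_nonneg_left hU
            have := ha 0; positivity
        _ = 4 ^ (k*k + k) * (a 0 ^ (k-1) * a 0 * a (k+1)) := by rw [pow_add]; ring
        _ = 4 ^ (k*k + k) * (a 0 ^ k * a (k+1)) := by
            rw [← pow_succ]
            congr 3
            omega
        _ ≤ 4 ^ ((k+1) * (k+1)) * (a 0 ^ ((k+1)-1) * a (k+1)) := by
            apply mul_le_mul_of_nonneg_right _ (by have := ha 0; have := ha (k+1); positivity)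
            apply pow_le_pow_right₀ (by norm_num)
            nlinarith

end Chain

lemma GN.chainX (n j : ℕ) (hj : j ≤ n) :
    ∃ C : ℝ, 0 < C ∧ ∀ a : ℕ → ℝ, (∀ k, 0 ≤ a k) →
      (∀ k, 1 ≤ k → k + 1 ≤ n → a k ^ 2 ≤ 4 * (a (k - 1) * a (k + 1))) →
      a j ^ n ≤ C * (a 0 ^ (n - j) * a n ^ j) := by
  induction j with
  | zero => exact ⟨1, one_pos, fun a ha hL => by simp⟩
  | succ k ih =>
    obtain ⟨C, hC, hXk⟩ := ih (by omega)
    obtain ⟨q, hq⟩ : ∃ q, n = k + q + 1 := ⟨n - k - 1, by omega⟩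
    subst hq
    refine ⟨(4 ^ ((q+1)*(q+1) * (k+q+1)) * C ^ q) ^ ((1:ℝ)/(q+1)), by positivity,
      fun a ha hL => ?_⟩
    have hbT := GN.chainT (n := q+1) (a := fun t => a (k + t)) (fun t => ha (k+t))
      (fun t ht htn => by
        have h0 := hL (k + t) (by omega) (by omega)
        have h1 : k + t - 1 = k + (t - 1) := by omega
        rw [h1] at h0
        exact h0) (q+1) (by omega) le_rfl
    simp only [Nat.add_sub_cancel] at hbT
    -- hbT : a (k+1) ^ (q+1) ≤ 4 ^ ((q+1)*(q+1)) * (a k ^ q * a (k+q+1))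
    have hXk' : a k ^ (k+q+1) ≤ C * (a 0 ^ (q+1) * a (k+q+1) ^ k) := by
      have h2 : k + q + 1 - k = q + 1 := by omega
      have := hXk a ha hL
      rwa [h2] at this
    have key : (a (k+1) ^ (k+q+1)) ^ (q+1)
        ≤ (4 ^ ((q+1)*(q+1) * (k+q+1)) * C ^ q) * (a 0 ^ q * a (k+q+1) ^ (k+1)) ^ (q+1) := by
      calc (a (k+1) ^ (k+q+1)) ^ (q+1) = (a (k+1) ^ (q+1)) ^ (k+q+1) := by
            rw [← pow_mul, ← pow_mul, Nat.mul_comm]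
        _ ≤ (4 ^ ((q+1)*(q+1)) * (a k ^ q * a (k+q+1))) ^ (k+q+1) := by
            apply pow_le_pow_left₀ (pow_nonneg (ha _) _) hbT
        _ = 4 ^ ((q+1)*(q+1)*(k+q+1)) * ((a k ^ (k+q+1)) ^ q * a (k+q+1) ^ (k+q+1)) := by
            rw [mul_pow, mul_pow, ← pow_mul, ← pow_mul, ← pow_mul, Nat.mul_comm q (k+q+1)]
        _ ≤ 4 ^ ((q+1)*(q+1)*(k+q+1)) *
              ((C * (a 0 ^ (q+1) * a (k+q+1) ^ k)) ^ q * a (k+q+1) ^ (k+q+1)) := by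
            apply mul_le_mul_of_nonneg_left _ (by positivity)
            apply mul_le_mul_of_nonneg_right _ (pow_nonneg (ha _) _)
            exact pow_le_pow_left₀ (pow_nonneg (ha _) _) hXk' q
        _ = (4 ^ ((q+1)*(q+1) * (k+q+1)) * C ^ q) * (a 0 ^ q * a (k+q+1) ^ (k+1)) ^ (q+1) := by
            rw [mul_pow C _ q, mul_pow (a 0 ^ (q+1)) _ q, mul_pow (a 0 ^ q) _ (q+1),
              ← pow_mul (a 0), ← pow_mul (a 0), ← pow_mul (a (k+q+1)), ← pow_mul (a (k+q+1))]
            have e1 : (q+1)*q = q*(q+1) := Nat.mul_comm _ _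
            have e2 : (k+1)*(q+1) = k*q + (k+q+1) := by ring
            rw [e1, e2, pow_add]
            ring
    have hfin := GN.root_extract' (n := q+1) (by omega) (by positivity)
      (mul_nonneg (pow_nonneg (ha 0) _) (pow_nonneg (ha _) _)) key
    have h3 : k + q + 1 - (k+1) = q := by omega
    rw [h3]
    calc a (k+1) ^ (k+q+1) ≤ _ := hfin
      _ = _ := by norm_num

set_option maxHeartbeats 1000000 in
lemma GN.master (i m : ℕ) (him : i < m) :
    ∃ C : ℝ, 0 < C ∧
      ∀ u : ℝ → ℝ, ContDiff ℝ ∞ u → Function.Periodic u (2 * Real.pi) →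
        (∫ s in (0 : ℝ)..(2 * Real.pi), u s) = 0 →
        ∀ A B : ℝ, (∀ x : ℝ, |iteratedDeriv m u x| ≤ A) →
          (∫ s in (0 : ℝ)..(2 * Real.pi), u s ^ 2) ≤ B ^ 2 → 0 ≤ B →
          ∀ x : ℝ, |iteratedDeriv i u x| ^ (2*m+1) ≤ C * (A ^ (2*i+1) * B ^ (2*(m-i))) := by
  obtain ⟨C, hC, hX⟩ := GN.chainX m i him.le
  refine ⟨(C^(2*m+1) * ((8:ℝ)^m * 4^(m*m))^(m-i)) ^ ((1:ℝ)/m), by positivity, ?_⟩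
  intro u hu hper hmean A B hA hB2 hB0 x
  have hpi := Real.pi_pos
  have h2pi := Real.two_pi_pos
  -- basic facts about iterated derivatives
  have hcd : ∀ j : ℕ, ContDiff ℝ ∞ (iteratedDeriv j u) := fun j => by
    rw [iteratedDeriv_eq_iterate]; exact ContDiff.iterate_deriv j hu
  have hdiff : ∀ j, Differentiable ℝ (iteratedDeriv j u) := fun j =>
    (hcd j).differentiable (by simp)
  have hcont : ∀ j, Continuous (iteratedDeriv j u) := fun j => (hcd j).continuous
  have hderiv : ∀ j, deriv (iteratedDeriv j u) = iteratedDeriv (j+1) u := fun j =>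
    (iteratedDeriv_succ).symm
  have hper' : ∀ j, Function.Periodic (iteratedDeriv j u) (2 * Real.pi) := by
    intro j
    induction j with
    | zero => simpa [iteratedDeriv_zero] using hper
    | succ k ih =>
      intro y
      have hfun : (fun z => iteratedDeriv k u (z + 2 * Real.pi)) = iteratedDeriv k u :=
        funext ih
      rw [iteratedDeriv_succ, ← deriv_comp_add_const (iteratedDeriv k u) (2*Real.pi) y, hfun]
  -- sup of |D^j u|, attained
  have hmax : ∀ j : ℕ, ∃ M : ℝ, 0 ≤ M ∧ (∀ y, |iteratedDeriv j u y| ≤ M) ∧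
      ∃ x₀ ∈ Icc (0:ℝ) (2*Real.pi), |iteratedDeriv j u x₀| = M := by
    intro j
    obtain ⟨x₀, hx₀, hmax⟩ := isCompact_Icc.exists_isMaxOn (s := Icc (0:ℝ) (2*Real.pi))
      (Set.nonempty_Icc.mpr (by linarith)) ((hcont j).abs.continuousOn)
    refine ⟨|iteratedDeriv j u x₀|, abs_nonneg _, ?_, x₀, hx₀, rfl⟩
    intro y
    obtain ⟨z, hz, hyz⟩ := (hper' j).exists_mem_Ico₀ h2pi y
    rw [hyz]
    exact hmax (Ico_subset_Icc_self hz)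
  choose a ha0 haB haA using hmax
  -- Lipschitz estimate
  have hlip : ∀ (j : ℕ) (y z : ℝ),
      |iteratedDeriv j u y - iteratedDeriv j u z| ≤ a (j+1) * |y - z| := by
    intro j y z
    have hL : LipschitzWith (a (j+1)).toNNReal (iteratedDeriv j u) := by
      apply lipschitzWith_of_nnnorm_deriv_le (hdiff j)
      intro w
      rw [hderiv j, ← NNReal.coe_le_coe, coe_nnnorm, Real.norm_eq_abs,
        Real.coe_toNNReal _ (ha0 (j+1))]
      exact haB (j+1) w
    have := hL.dist_le_mul y z
    rwa [Real.dist_eq, Real.dist_eq, Real.coe_toNNReal _ (ha0 (j+1))] at this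
  -- Rolle: zeros of higher derivatives
  have hzero : ∀ j : ℕ, 1 ≤ j → ∃ z, iteratedDeriv j u z = 0 := by
    intro j hj
    obtain ⟨j', rfl⟩ : ∃ j', j = j' + 1 := ⟨j - 1, by omega⟩
    obtain ⟨c, _, hc⟩ := exists_deriv_eq_zero (f := iteratedDeriv j' u) h2pi
      ((hcont j').continuousOn) (by simpa using ((hper' j') 0).symm)
    exact ⟨c, by rw [← hderiv j']; exact hc⟩
  -- Landau chain inequality
  have hLan : ∀ j, 1 ≤ j → j + 1 ≤ m → a j ^ 2 ≤ 4 * (a (j-1) * a (j+1)) := by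
    intro j hj _
    obtain ⟨j', rfl⟩ : ∃ j', j = j' + 1 := ⟨j - 1, by omega⟩
    simp only [Nat.add_sub_cancel]
    rcases eq_or_lt_of_le (ha0 (j'+1)) with h1 | h1
    · rw [← h1]
      have := mul_nonneg (ha0 j') (ha0 (j'+2))
      nlinarith
    rcases eq_or_lt_of_le (ha0 (j'+2)) with h2 | h2
    · exfalso
      have hz2 : ∀ y, iteratedDeriv (j'+2) u y = 0 := by
        intro y
        have := haB (j'+2) y
        rw [← h2] at this
        exact abs_eq_zero.mp (le_antisymm this (abs_nonneg _))
      have hconst : ∀ y z, iteratedDeriv (j'+1) u y = iteratedDeriv (j'+1) u z := by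
        intro y z
        exact is_const_of_deriv_eq_zero (hdiff (j'+1))
          (fun w => by rw [hderiv (j'+1)]; exact hz2 w) y z
      obtain ⟨z, hz'⟩ := hzero (j'+1) (by omega)
      obtain ⟨x₀, _, hx₀⟩ := haA (j'+1)
      rw [← hx₀, hconst x₀ z, hz'] at h1
      simp at h1
    · -- main case: MVT + Lipschitz
      obtain ⟨x₀, _, hx₀⟩ := haA (j'+1)
      set h : ℝ := a (j'+1) / (2 * a (j'+2)) with hh
      have hhpos : 0 < h := by positivity
      obtain ⟨ξ, hξmem, hξ⟩ := exists_deriv_eq_slope (iteratedDeriv j' u)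
        (by linarith : x₀ - h < x₀ + h) ((hcont j').continuousOn)
        ((hdiff j').differentiableOn)
      have hnum : |iteratedDeriv j' u (x₀ + h) - iteratedDeriv j' u (x₀ - h)| ≤ 2 * a j' := by
        calc |iteratedDeriv j' u (x₀ + h) - iteratedDeriv j' u (x₀ - h)|
            ≤ |iteratedDeriv j' u (x₀ + h)| + |iteratedDeriv j' u (x₀ - h)| := abs_sub _ _
          _ ≤ a j' + a j' := add_le_add (haB _ _) (haB _ _)
          _ = 2 * a j' := by ring
      have hslope : |deriv (iteratedDeriv j' u) ξ| ≤ a j' / h := by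
        rw [hξ, abs_div]
        have hd : (x₀ + h) - (x₀ - h) = 2*h := by ring
        rw [hd, abs_of_pos (show (0:ℝ) < 2*h by linarith)]
        rw [div_le_div_iff₀ (by linarith) hhpos]
        calc |iteratedDeriv j' u (x₀ + h) - iteratedDeriv j' u (x₀ - h)| * h
            ≤ (2 * a j') * h := mul_le_mul_of_nonneg_right hnum hhpos.le
          _ = a j' * (2 * h) := by ring
      have hdist : |x₀ - ξ| ≤ h := by
        obtain ⟨hm1, hm2⟩ := hξmem
        rw [abs_le]
        constructor <;> linarith
      have hkey : a (j'+1) ≤ a j' / h + a (j'+2) * h := by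
        have hb1 : |iteratedDeriv (j'+1) u ξ| ≤ a j' / h := by
          rw [← hderiv j']; exact hslope
        have hb2 := hlip (j'+1) x₀ ξ
        have hb3 : a (j'+2) * |x₀ - ξ| ≤ a (j'+2) * h :=
          mul_le_mul_of_nonneg_left hdist h2.le
        have hb4 := abs_sub_abs_le_abs_sub (iteratedDeriv (j'+1) u x₀) (iteratedDeriv (j'+1) u ξ)
        rw [← hx₀]
        linarith
      rw [hh] at hkey
      have e2 : a (j'+2) * (a (j'+1) / (2 * a (j'+2))) = a (j'+1) / 2 := by
        field_simp
      rw [div_div_eq_mul_div, e2] at hkey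
      have e3 : a (j'+1) / 2 ≤ a j' * (2 * a (j'+2)) / a (j'+1) := by linarith
      rw [div_le_div_iff₀ (by linarith) h1] at e3
      nlinarith [e3]
  -- abbreviation for the L² mass
  set I : ℝ := ∫ s in (0:ℝ)..(2*Real.pi), u s ^ 2 with hIdef
  have hIint : ∀ c d : ℝ, IntervalIntegrable (fun s => u s ^ 2) volume c d :=
    fun c d => ((hu.continuous).pow 2).intervalIntegrable c d
  have hI0 : 0 ≤ I := intervalIntegral.integral_nonneg (by linarith) (fun y _ => sq_nonneg _)
  have huB : ∀ y, |u y| ≤ a 0 := fun y => by simpa using haB 0 y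
  have hulip : ∀ y z, |u y - u z| ≤ a 1 * |y - z| := fun y z => by simpa using hlip 0 y z
  obtain ⟨x₀, hx₀mem, hx₀'⟩ := haA 0
  have hx₀ : |u x₀| = a 0 := by simpa using hx₀'
  -- u has a zero on [0, 2π]
  have huzero : ∃ z ∈ Icc (0:ℝ) (2*Real.pi), u z = 0 := by
    by_contra hcon
    push_neg at hcon
    have hdich : (∀ z ∈ Icc (0:ℝ) (2*Real.pi), 0 < u z) ∨
        (∀ z ∈ Icc (0:ℝ) (2*Real.pi), u z < 0) := by
      by_contra hd
      push_neg at hd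
      obtain ⟨⟨z₁, hz₁, hz₁'⟩, ⟨z₂, hz₂, hz₂'⟩⟩ := hd
      have h₁ : u z₁ ≤ 0 := hz₁'
      have h₂ : 0 ≤ u z₂ := hz₂'
      obtain ⟨z, hzmem, hz0⟩ := intermediate_value_uIcc (f := u) (a := z₁) (b := z₂)
        (hu.continuous.continuousOn)
        (show (0:ℝ) ∈ uIcc (u z₁) (u z₂) by
          rw [Set.mem_uIcc]; left; exact ⟨h₁, h₂⟩)
      have hzIcc : z ∈ Icc (0:ℝ) (2*Real.pi) := by
        have hsub : uIcc z₁ z₂ ⊆ Icc (0:ℝ) (2*Real.pi) := by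
          rw [← Set.uIcc_of_le (by linarith : (0:ℝ) ≤ 2*Real.pi)]
          exact Set.uIcc_subset_uIcc
            (by rw [Set.uIcc_of_le (by linarith : (0:ℝ) ≤ 2*Real.pi)]; exact hz₁)
            (by rw [Set.uIcc_of_le (by linarith : (0:ℝ) ≤ 2*Real.pi)]; exact hz₂)
        exact hsub hzmem
      exact hcon z hzIcc hz0
    rcases hdich with hpos | hneg
    · have hgt : 0 < ∫ s in (0:ℝ)..(2*Real.pi), u s :=
        intervalIntegral.intervalIntegral_pos_of_pos_on
          ((hu.continuous).intervalIntegrable _ _)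
          (fun y hy => hpos y (Ioo_subset_Icc_self hy)) h2pi
      rw [hmean] at hgt
      exact lt_irrefl _ hgt
    · have hgt : 0 < ∫ s in (0:ℝ)..(2*Real.pi), (-(u s)) :=
        intervalIntegral.intervalIntegral_pos_of_pos_on
          ((hu.continuous.neg).intervalIntegrable _ _)
          (fun y hy => by simpa using hneg y (Ioo_subset_Icc_self hy)) h2pi
      rw [intervalIntegral.integral_neg, hmean] at hgt
      simp at hgt
  -- a zero of u within distance π of x₀
  have hnearzero : ∃ ξ : ℝ, u ξ = 0 ∧ |x₀ - ξ| ≤ Real.pi := by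
    obtain ⟨z, hz, huz⟩ := huzero
    rcases le_or_gt (|x₀ - z|) Real.pi with hcase | hcase
    · exact ⟨z, huz, hcase⟩
    rcases le_or_gt z x₀ with hzx | hzx
    · refine ⟨z + 2*Real.pi, by rw [hper z]; exact huz, ?_⟩
      have hgt : Real.pi < x₀ - z := by
        rwa [abs_of_nonneg (by linarith)] at hcase
      have h1' := hx₀mem.2
      have h2' := hz.1
      rw [abs_le]
      constructor <;> [skip; skip] <;> nlinarith
    · refine ⟨z - 2*Real.pi, ?_, ?_⟩
      · have := hper (z - 2*Real.pi)
        rw [sub_add_cancel] at this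
        rw [← this]; exact huz
      · have hgt : Real.pi < z - x₀ := by
          rw [abs_sub_comm] at hcase
          rwa [abs_of_nonneg (by linarith)] at hcase
        have h1' := hx₀mem.1
        have h2' := hz.2
        rw [abs_le]
        constructor <;> nlinarith
  obtain ⟨ξ, hξ0, hξd⟩ := hnearzero
  -- K1 : a 0 ≤ π * a 1
  have K1 : a 0 ≤ Real.pi * a 1 := by
    calc a 0 = |u x₀ - u ξ| := by rw [hξ0, sub_zero, hx₀]
      _ ≤ a 1 * |x₀ - ξ| := hulip x₀ ξ
      _ ≤ a 1 * Real.pi := mul_le_mul_of_nonneg_left hξd (ha0 1)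
      _ = Real.pi * a 1 := mul_comm _ _
  -- K2 : a 0 ^ 3 ≤ 8 * (a 1 * I)
  have K2 : a 0 ^ 3 ≤ 8 * (a 1 * I) := by
    rcases eq_or_lt_of_le (ha0 0) with h00 | h00
    · rw [← h00]
      have := mul_nonneg (ha0 1) hI0
      nlinarith
    have ha1pos : 0 < a 1 := by nlinarith
    set L : ℝ := min (a 0 / (2 * a 1)) Real.pi with hLdef
    have hLpos : 0 < L := lt_min (by positivity) hpi
    have hLle : L ≤ 2*Real.pi := le_trans (min_le_right _ _) (by linarith)
    have hlow : ∀ y ∈ Icc x₀ (x₀ + L), a 0^2/4 ≤ u y ^ 2 := by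
      intro y hy
      have hd1 : |x₀ - y| ≤ L := by
        rw [abs_le]
        obtain ⟨hy1, hy2⟩ := hy
        constructor <;> linarith
      have hd2 : |u x₀ - u y| ≤ a 1 * L :=
        le_trans (hulip x₀ y) (mul_le_mul_of_nonneg_left hd1 (ha0 1))
      have hd3 : a 1 * L ≤ a 0 / 2 := by
        have := min_le_left (a 0 / (2 * a 1)) Real.pi
        calc a 1 * L ≤ a 1 * (a 0 / (2 * a 1)) :=
              mul_le_mul_of_nonneg_left (min_le_left _ _) (ha0 1)
          _ = a 0 / 2 := by field_simp
      have hd4 : a 0 / 2 ≤ |u y| := by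
        have := abs_sub_abs_le_abs_sub (u x₀) (u y)
        rw [hx₀] at this
        linarith
      calc a 0^2/4 = (a 0/2)^2 := by ring
        _ ≤ |u y|^2 := pow_le_pow_left₀ (by linarith) hd4 2
        _ = u y ^2 := sq_abs _
    have hIineq : L * (a 0^2/4) ≤ I := by
      have h7 : ∫ s in x₀..(x₀+L), (a 0^2/4 : ℝ) ≤ ∫ s in x₀..(x₀+L), u s^2 :=
        intervalIntegral.integral_mono_on (by linarith) (intervalIntegrable_const)
          (hIint _ _) hlow
      have h8 : ∫ s in x₀..(x₀+L), u s^2 ≤ ∫ s in x₀..(x₀+2*Real.pi), u s^2 :=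
        intervalIntegral.integral_mono_interval le_rfl (by linarith) (by linarith)
          (Filter.Eventually.of_forall (fun y => sq_nonneg _)) (hIint _ _)
      have h9 : (∫ s in x₀..(x₀+2*Real.pi), u s^2) = I := by
        have hp2 : Function.Periodic (fun s => u s^2) (2*Real.pi) := fun y => by
          simp [hper y]
        have := hp2.intervalIntegral_add_eq x₀ 0
        rw [hIdef]
        simpa using this
      rw [intervalIntegral.integral_const, smul_eq_mul] at h7
      have he : x₀ + L - x₀ = L := by ring
      rw [he] at h7
      linarith
    rcases min_cases (a 0 / (2 * a 1)) Real.pi with ⟨heq, _⟩ | ⟨heq, _⟩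
    · rw [hLdef, heq] at hIineq
      have hmul := mul_le_mul_of_nonneg_left hIineq (show (0:ℝ) ≤ 8 * a 1 by linarith)
      have e : (8 * a 1) * (a 0/(2*a 1) * (a 0^2/4)) = a 0^3 := by
        field_simp
        ring
      rw [e] at hmul
      linarith
    · rw [hLdef, heq] at hIineq
      have hm1 : a 1 * (Real.pi * (a 0^2/4)) ≤ a 1 * I :=
        mul_le_mul_of_nonneg_left hIineq ha1pos.le
      have f1 := mul_le_mul_of_nonneg_right K1 (sq_nonneg (a 0))
      have f2 : a 0 * a 0^2 = a 0^3 := by ring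
      have f3 : (Real.pi * a 1) * a 0^2 = 4*(a 1*(Real.pi*(a 0^2/4))) := by ring
      rw [f2, f3] at f1
      have f4 : 0 ≤ a 1 * I := mul_nonneg ha1pos.le hI0
      linarith [f1, hm1, f4]
  -- chain inequalities
  have hT := GN.chainT ha0 hLan m (by omega) le_rfl
  have hXc := hX a ha0 hLan
  have hAm : a m ≤ A := by
    obtain ⟨xm, _, hxm⟩ := haA m
    rw [← hxm]; exact hA xm
  have hA0 : 0 ≤ A := (ha0 m).trans hAm
  -- step 1 : a 0 ^ (2m+1) ≤ 8^m 4^(m²) (a m B^{2m})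
  have hstep1 : a 0 ^ (2*m+1) ≤ (8:ℝ)^m * 4^(m*m) * (a m * B ^ (2*m)) := by
    have h30 : (a 0 ^3)^m ≤ (8 * (a 1 * I))^m :=
      pow_le_pow_left₀ (pow_nonneg (ha0 0) 3) K2 m
    have hIm : I ^ m ≤ (B^2) ^ m := pow_le_pow_left₀ hI0 hB2 m
    have key : a 0 ^ (3*m) ≤ (8:ℝ)^m * 4^(m*m) * (a m * B^(2*m)) * a 0 ^ (m-1) := by
      calc a 0^(3*m) = (a 0^3)^m := pow_mul _ 3 m
        _ ≤ (8 * (a 1 * I))^m := h30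
        _ = 8^m * (a 1^m * I^m) := by rw [mul_pow, mul_pow]
        _ ≤ 8^m * ((4^(m*m) * (a 0^(m-1) * a m)) * (B^2)^m) := by
            apply mul_le_mul_of_nonneg_left _ (by positivity)
            exact mul_le_mul hT hIm (pow_nonneg hI0 m)
              (mul_nonneg (by positivity) (mul_nonneg (pow_nonneg (ha0 0) _) (ha0 m)))
        _ = 8^m * 4^(m*m) * (a m * B^(2*m)) * a 0^(m-1) := by
            rw [← pow_mul B 2 m]; ring
    rcases eq_or_lt_of_le (ha0 0) with h00 | h00
    · rw [← h00, zero_pow (by omega)]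
      exact mul_nonneg (by positivity) (mul_nonneg (ha0 m) (pow_nonneg hB0 _))
    · have hpow : 0 < a 0 ^ (m-1) := pow_pos h00 _
      have he : 2*m+1 + (m-1) = 3*m := by omega
      have key' : a 0^(2*m+1) * a 0^(m-1)
          ≤ (8:ℝ)^m * 4^(m*m) * (a m * B^(2*m)) * a 0^(m-1) := by
        rw [← pow_add, he]; exact key
      exact le_of_mul_le_mul_right key' hpow
  -- step 2
  have hstep2 : (a i ^ (2*m+1)) ^ m
      ≤ (C^(2*m+1) * ((8:ℝ)^m * 4^(m*m))^(m-i)) * (a m^(2*i+1) * B^(2*(m-i)))^m := by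
    obtain ⟨p, hp⟩ : ∃ p, m = i + p := ⟨m - i, by omega⟩
    have hmi : m - i = p := by omega
    rw [hmi]
    calc (a i^(2*m+1))^m = (a i^m)^(2*m+1) := by
          rw [← pow_mul, ← pow_mul, Nat.mul_comm]
      _ ≤ (C * (a 0^(m-i) * a m^i))^(2*m+1) :=
          pow_le_pow_left₀ (pow_nonneg (ha0 i) m) hXc _
      _ = C^(2*m+1) * ((a 0^(2*m+1))^p * (a m^i)^(2*m+1)) := by
          rw [hmi, mul_pow, mul_pow, ← pow_mul (a 0), ← pow_mul (a 0),
            Nat.mul_comm p (2*m+1)]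
      _ ≤ C^(2*m+1) * (((8:ℝ)^m * 4^(m*m) * (a m * B^(2*m)))^p * (a m^i)^(2*m+1)) := by
          apply mul_le_mul_of_nonneg_left _ (by positivity)
          apply mul_le_mul_of_nonneg_right _ (pow_nonneg (pow_nonneg (ha0 m) i) _)
          exact pow_le_pow_left₀ (pow_nonneg (ha0 0) _) hstep1 p
      _ = (C^(2*m+1) * ((8:ℝ)^m * 4^(m*m))^p) * ((a m^p * a m^(i*(2*m+1))) * B^(2*m*p)) := by
          rw [mul_pow ((8:ℝ)^m * 4^(m*m)), mul_pow (a m) (B^(2*m)) p,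
            ← pow_mul (a m) i (2*m+1), ← pow_mul B (2*m) p]
          ring
      _ = (C^(2*m+1) * ((8:ℝ)^m * 4^(m*m))^p) * (a m^((2*i+1)*m) * B^((2*p)*m)) := by
          have em : (2*i+1) * m = p + i*(2*m+1) := by subst hp; ring
          have eb : 2*m*p = (2*p)*m := by ring
          rw [← pow_add (a m) p (i*(2*m+1)), ← em, eb]
      _ = (C^(2*m+1) * ((8:ℝ)^m * 4^(m*m))^p) * (a m^(2*i+1) * B^(2*p))^m := by
          rw [mul_pow (a m^(2*i+1)) (B^(2*p)) m, ← pow_mul (a m) (2*i+1) m,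
            ← pow_mul B (2*p) m]
  -- root extraction and conclusion
  have hroot := GN.root_extract' (n := m) (by omega)
    (K := C^(2*m+1) * ((8:ℝ)^m * 4^(m*m))^(m-i))
    (by positivity)
    (mul_nonneg (pow_nonneg (ha0 m) _) (pow_nonneg hB0 _)) hstep2
  calc |iteratedDeriv i u x| ^ (2*m+1) ≤ a i ^ (2*m+1) :=
        pow_le_pow_left₀ (abs_nonneg _) (haB i x) _
    _ ≤ (C^(2*m+1) * ((8:ℝ)^m * 4^(m*m))^(m-i)) ^ ((1:ℝ)/m)
        * (a m^(2*i+1) * B^(2*(m-i))) := hroot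
    _ ≤ (C^(2*m+1) * ((8:ℝ)^m * 4^(m*m))^(m-i)) ^ ((1:ℝ)/m)
        * (A^(2*i+1) * B^(2*(m-i))) := by
        apply mul_le_mul_of_nonneg_left _ (by positivity)
        exact mul_le_mul_of_nonneg_right (pow_le_pow_left₀ (ha0 m) hAm _)
          (pow_nonneg hB0 _)

/-- Gagliardo–Nirenberg interpolation on the circle of circumference `2π`
(modelled as `2π`-periodic smooth functions with mean zero):
`‖Dⁱu‖_∞ ≤ c(m,i) ‖Dᵐu‖_∞^{(2i+1)/(2m+1)} ‖u‖_{L²}^{2(m−i)/(2m+1)}`. -/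
theorem stmt_15 (i m : ℕ) (him : i < m) :
    ∃ c : ℝ, 0 < c ∧
      ∀ u : ℝ → ℝ, ContDiff ℝ (⊤ : ℕ∞) u → Function.Periodic u (2 * Real.pi) →
        (∫ s in (0 : ℝ)..(2 * Real.pi), u s) = 0 →
        ∀ A B : ℝ,
          (∀ x : ℝ, |iteratedDeriv m u x| ≤ A) →
          (∫ s in (0 : ℝ)..(2 * Real.pi), u s ^ 2) ^ ((1 : ℝ) / 2) ≤ B →
          ∀ x : ℝ, |iteratedDeriv i u x|
            ≤ c * A ^ ((2 * (i : ℝ) + 1) / (2 * (m : ℝ) + 1))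
                * B ^ (2 * ((m : ℝ) - (i : ℝ)) / (2 * (m : ℝ) + 1)) := by
  obtain ⟨C, hC, hM⟩ := GN.master i m him
  have hnm : (0:ℝ) < 2*(m:ℝ)+1 := by positivity
  refine ⟨C ^ ((1:ℝ)/(2*(m:ℝ)+1)), by positivity, ?_⟩
  intro u hu hper hmean A B hA hB x
  have hu' : ContDiff ℝ ∞ u := hu.of_le (by simp)
  have hA0 : 0 ≤ A := (abs_nonneg _).trans (hA 0)
  have hI0 : 0 ≤ ∫ s in (0:ℝ)..(2*Real.pi), u s ^ 2 :=
    intervalIntegral.integral_nonneg (by positivity) (fun y _ => sq_nonneg _)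
  have hB0 : 0 ≤ B := le_trans (Real.rpow_nonneg hI0 _) hB
  have hB2 : (∫ s in (0:ℝ)..(2*Real.pi), u s ^ 2) ≤ B^2 := by
    have h1 : ((∫ s in (0:ℝ)..(2*Real.pi), u s ^ 2) ^ ((1:ℝ)/2))^2 ≤ B^2 :=
      pow_le_pow_left₀ (Real.rpow_nonneg hI0 _) hB 2
    rwa [← Real.rpow_natCast (_ ^ ((1:ℝ)/2)) 2, ← Real.rpow_mul hI0,
      (by norm_num : (1:ℝ)/2 * ((2:ℕ):ℝ) = 1), Real.rpow_one] at h1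
  have hmaster := hM u hu' hper hmean A B hA hB2 hB0 x
  set R := C ^ ((1:ℝ)/(2*(m:ℝ)+1)) * A ^ ((2 * (i:ℝ) + 1) / (2 * (m:ℝ) + 1))
      * B ^ (2 * ((m:ℝ) - (i:ℝ)) / (2 * (m:ℝ) + 1)) with hR
  have hR0 : 0 ≤ R :=
    mul_nonneg (mul_nonneg (Real.rpow_nonneg hC.le _) (Real.rpow_nonneg hA0 _))
      (Real.rpow_nonneg hB0 _)
  have hRpow : R ^ (2*m+1) = C * (A ^ (2*i+1) * B ^ (2*(m-i))) := by
    have hcast : ((2*m+1 : ℕ) : ℝ) = 2*(m:ℝ)+1 := by push_cast; ring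
    rw [hR, mul_pow, mul_pow,
      ← Real.rpow_natCast (C ^ ((1:ℝ)/(2*(m:ℝ)+1))) (2*m+1),
      ← Real.rpow_natCast (A ^ ((2 * (i:ℝ) + 1) / (2 * (m:ℝ) + 1))) (2*m+1),
      ← Real.rpow_natCast (B ^ (2 * ((m:ℝ) - (i:ℝ)) / (2 * (m:ℝ) + 1))) (2*m+1),
      ← Real.rpow_mul hC.le, ← Real.rpow_mul hA0, ← Real.rpow_mul hB0, hcast,
      one_div, inv_mul_cancel₀ (ne_of_gt hnm), Real.rpow_one,
      div_mul_cancel₀ _ (ne_of_gt hnm), div_mul_cancel₀ _ (ne_of_gt hnm)]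
    have eA : (2*(i:ℝ)+1) = ((2*i+1 : ℕ) : ℝ) := by push_cast; ring
    have eB : (2*((m:ℝ)-(i:ℝ))) = ((2*(m-i) : ℕ) : ℝ) := by
      push_cast [Nat.cast_sub him.le]; ring
    rw [eA, eB, Real.rpow_natCast, Real.rpow_natCast]
    ring
  have hXR : |iteratedDeriv i u x| ^ (2*m+1) ≤ R ^ (2*m+1) := by
    rw [hRpow]; exact hmaster
  exact le_of_pow_le_pow_left₀ (by omega) hR0 hXR
end
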